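/- arXiv:2409.10844 — 3 statements merged into one kernel-verified Lean document; each statement's English description precedes it below -/
import Mathlib

section
/- Let T be a continuous linear operator on an infinite-dimensional F-space X (topological vector space whose topology comes from a complete translation-invariant metric). If T has the specification property (with respect to the translation-invariant metric), then the Bowen topological entropy of T is infinite. -/
open Filter Topology

section Defs
variable {Y : Type*} [PseudoMetricSpace Y]

/-- A finite set `E` is `(n, ε)`-separated for the map `f`. -/
def IsSep (f : Y → Y) (n : ℕ) (ε : ℝ) (E : Finset Y) : Prop :=
  ∀ x ∈ E, ∀ y ∈ E, x ≠ y → ∃ i < n, ε < dist (f^[i] x) (f^[i] y)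

/-- Maximal cardinality of an `(n, ε)`-separated subset of `K`. -/
noncomputable def sepNum (f : Y → Y) (K : Set Y) (n : ℕ) (ε : ℝ) : ℕ :=
  sSup {m : ℕ | ∃ E : Finset Y, ↑E ⊆ K ∧ IsSep f n ε E ∧ E.card = m}

/-- Bowen topological entropy of a (uniformly continuous) map on a metric space. -/
noncomputable def entBowen (f : Y → Y) : EReal :=
  ⨆ (K : Set Y) (_ : IsCompact K) (ε : ℝ) (_ : 0 < ε),
    limsup (fun n : ℕ => ((Real.log (sepNum f K n ε) / n : ℝ) : EReal)) atTop
end Defs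

section Spec
variable {Y : Type*} [PseudoMetricSpace Y]

/-- Specification property of `f` relative to an invariant set `A`. -/
def SpecPropOn (f : Y → Y) (A : Set Y) : Prop :=
  ∀ ε : ℝ, 0 < ε → ∃ N : ℕ, ∀ s : ℕ, 0 < s → ∀ y : ℕ → Y, (∀ i < s, y i ∈ A) →
    ∀ a b : ℕ → ℕ, (∀ i < s, a i ≤ b i) → (∀ i, i + 1 < s → b i + N ≤ a (i + 1)) →
      ∃ x ∈ A, f^[N + b (s - 1)] x = x ∧
        ∀ i < s, ∀ n, a i ≤ n → n ≤ b i → dist (f^[n] x) (f^[n] (y i)) < ε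

/-- Bowen specification property. -/
def SpecProp (f : Y → Y) : Prop := SpecPropOn f Set.univ
end Spec

/-!
Specification gives a periodic point `x₁ ≠ 0`, say of period `p`. For `q` a large multiple of
`p`, specification also gives, for every `c ∈ ℕ`, a point `x_c` close to `0` whose `q`-th iterate
is close to `T^q (c • x₁) = c • x₁`. Continuity of scalar multiplication keeps the multiples
`(c - c') • x₁`, `c ≠ c'`, a fixed distance `δ` away from `0`, so by translation invariance the
`x_c` are `(q + 1, δ / 2)`-separated: one gets as many separated points as one likes at a single
time, all near `0`. These families, taken closer and closer to `0`, form together with `0` a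
compact set on which `log (sepNum n) / n` is unbounded.
-/

open Metric Function

section SeparatedSets

variable {Y : Type*} [PseudoMetricSpace Y] {f : Y → Y}

theorem bddAbove_card_isSep (hf : Continuous f) {K : Set Y} (hK : IsCompact K) (n : ℕ)
    {ε : ℝ} (hε : 0 < ε) :
    BddAbove {m : ℕ | ∃ E : Finset Y, ↑E ⊆ K ∧ IsSep f n ε E ∧ E.card = m} := by
  classical
  -- Code a point by centres of `ε/2`-balls containing its first `n` iterates: points of a
  -- separated set get distinct codes.
  have hnet : ∀ i : ℕ, ∃ D : Finset Y, ∀ x ∈ K, ∃ y ∈ D, dist (f^[i] x) y < ε / 2 := fun i => by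
    obtain ⟨D, -, hD, hKD⟩ := (hK.image (hf.iterate i)).finite_cover_balls (half_pos hε)
    exact ⟨hD.toFinset, fun x hx => by simpa using hKD (Set.mem_image_of_mem _ hx)⟩
  choose D hD using hnet
  choose! code hcodeD hcode using fun x hx i => hD i x hx
  refine ⟨((Finset.range n).pi D).card, ?_⟩
  rintro m ⟨E, hEK, hEsep, rfl⟩
  refine Finset.card_le_card_of_injOn (fun x i _ => code x i)
    (fun x hx => Finset.mem_pi.mpr fun i _ => hcodeD x (hEK hx) i) fun x hx y hy hxy => ?_
  by_contra hne
  obtain ⟨i, hi, hsep⟩ := hEsep x hx y hy hne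
  have hcode_eq : code x i = code y i := congrFun (congrFun hxy i) (Finset.mem_range.mpr hi)
  have hx' := hcode x (hEK hx) i
  have hy' := hcode y (hEK hy) i
  rw [← hcode_eq] at hy'
  linarith [dist_triangle_right (f^[i] x) (f^[i] y) (code x i)]

theorem card_le_sepNum (hf : Continuous f) {K : Set Y} (hK : IsCompact K) {n : ℕ} {ε : ℝ}
    (hε : 0 < ε) {E : Finset Y} (hEK : ↑E ⊆ K) (hE : IsSep f n ε E) :
    E.card ≤ sepNum f K n ε :=
  le_csSup (bddAbove_card_isSep hf hK n hε) ⟨E, hEK, hE, rfl⟩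

theorem entBowen_eq_top_of_frequently {K : Set Y} (hK : IsCompact K) {ε : ℝ} (hε : 0 < ε)
    (h : ∀ C : ℝ, ∃ᶠ n : ℕ in atTop, C ≤ Real.log (sepNum f K n ε) / n) :
    entBowen f = ⊤ := by
  refine eq_top_iff.mpr (le_trans ?_ (le_iSup₂_of_le K hK (le_iSup₂_of_le ε hε le_rfl)))
  refine ((EReal.eq_top_iff_forall_lt _).mpr fun C => ?_).ge
  refine (EReal.coe_lt_coe_iff.mpr (lt_add_one C)).trans_le (le_limsup_of_frequently_le ?_ ?_)
  · exact (h (C + 1)).mono fun n hn => EReal.coe_le_coe_iff.mpr hn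
  · exact isBoundedUnder_of ⟨⊤, fun _ => le_top⟩

theorem isCompact_insert_iUnion_finset {y₀ : Y} {E : ℕ → Finset Y} {r : ℕ → ℝ}
    (hr : Tendsto r atTop (𝓝 0)) (hE : ∀ j, ↑(E j) ⊆ ball y₀ (r j)) :
    IsCompact (insert y₀ (⋃ j, (E j : Set Y))) := by
  let u : (Σ j, E j) → Y := fun i => i.2
  have hfst : Tendsto (Sigma.fst : (Σ j, E j) → ℕ) cofinite atTop := by
    rw [← Nat.cofinite_eq_atTop]
    refine Tendsto.cofinite_of_finite_preimage_singleton fun j => ?_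
    refine (Set.finite_range (Sigma.mk j)).subset ?_
    rintro ⟨j', x⟩ rfl
    exact ⟨x, rfl⟩
  have hu : Tendsto u cofinite (𝓝 y₀) := by
    refine tendsto_iff_dist_tendsto_zero.mpr
      (squeeze_zero (fun _ => dist_nonneg) (fun i => ?_) (hr.comp hfst))
    exact (mem_ball.mp (hE i.1 i.2.2)).le
  convert hu.isCompact_insert_range_of_cofinite using 2
  ext x
  simp [u]

theorem entBowen_eq_top_of_forall_exists_isSep (hf : Continuous f) (y₀ : Y) {ε : ℝ} (hε : 0 < ε)
    (h : ∀ r > 0, ∀ C : ℝ, ∀ n₀ : ℕ, ∃ n ≥ n₀, ∃ E : Finset Y,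
      ↑E ⊆ ball y₀ r ∧ IsSep f n ε E ∧ Real.exp (C * n) ≤ E.card) :
    entBowen f = ⊤ := by
  choose n hn E hEball hEsep hEcard using
    fun j : ℕ => h (1 / (j + 1)) (by positivity) j (j + 1)
  have hK := isCompact_insert_iUnion_finset tendsto_one_div_add_atTop_nhds_zero_nat hEball
  refine entBowen_eq_top_of_frequently hK hε fun C => frequently_atTop.mpr fun m => ?_
  set j := max m ⌈C⌉₊
  have hnj : (0 : ℝ) < n j := by exact_mod_cast (Nat.succ_pos j).trans_le (hn j)
  have hcard : (E j).card ≤ sepNum f _ (n j) ε :=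
    card_le_sepNum hf hK hε (fun x hx => Set.mem_insert_of_mem _ (Set.mem_iUnion_of_mem j hx))
      (hEsep j)
  have hcardpos : (0 : ℝ) < (E j).card := (Real.exp_pos _).trans_le (hEcard j)
  refine ⟨n j, (le_max_left m _).trans ((Nat.le_succ j).trans (hn j)), ?_⟩
  rw [le_div_iff₀ hnj]
  calc C * n j ≤ j * n j := by
        gcongr
        exact (Nat.le_ceil C).trans (by exact_mod_cast le_max_right _ _)
    _ ≤ Real.log (E j).card := (Real.le_log_iff_exp_le hcardpos).mpr (hEcard j)
    _ ≤ Real.log (sepNum f _ (n j) ε) := Real.log_le_log hcardpos (by exact_mod_cast hcard)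

end SeparatedSets

namespace SpecProp

variable {Y : Type*} [PseudoMetricSpace Y] {f : Y → Y}

theorem exists_isPeriodicPt_dist_lt (hspec : SpecProp f) (y : Y) {ε : ℝ} (hε : 0 < ε) :
    ∃ x p, 0 < p ∧ IsPeriodicPt f p x ∧ dist x y < ε := by
  obtain ⟨N, hN⟩ := hspec ε hε
  obtain ⟨x, -, hx, hclose⟩ := hN 1 one_pos (fun _ => y) (fun _ _ => trivial) (fun _ => 0)
    (fun _ => 1) (fun _ _ => zero_le_one) (fun i hi => by omega)
  exact ⟨x, N + 1, N.succ_pos, hx, hclose 0 one_pos 0 le_rfl zero_le_one⟩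

theorem exists_dist_lt_dist_iterate_lt (hspec : SpecProp f) {η : ℝ} (hη : 0 < η) :
    ∃ N, ∀ q, N ≤ q → ∀ y₀ y₁ : Y, ∃ x, dist x y₀ < η ∧ dist (f^[q] x) (f^[q] y₁) < η := by
  obtain ⟨N, hN⟩ := hspec η hη
  refine ⟨N, fun q hq y₀ y₁ => ?_⟩
  obtain ⟨x, -, -, hx⟩ := hN 2 two_pos (fun i => if i = 0 then y₀ else y₁) (fun _ _ => trivial)
    (fun i => if i = 0 then 0 else q) (fun i => if i = 0 then 0 else q) (fun _ _ => le_rfl)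
    (fun i hi => by rw [show i = 0 by omega]; simpa using hq)
  exact ⟨x, by simpa using hx 0 two_pos 0 le_rfl le_rfl,
    by simpa using hx 1 one_lt_two q le_rfl le_rfl⟩

end SpecProp

theorem exists_mem_nhds_zero_forall_smul_notMem (𝕜 : Type*) {E : Type*}
    [NontriviallyNormedField 𝕜] [AddCommGroup E] [Module 𝕜 E] [TopologicalSpace E]
    [ContinuousSMul 𝕜 E] [T1Space E]
    {v : E} (hv : v ≠ 0) : ∃ U ∈ 𝓝 (0 : E), ∀ c : 𝕜, 1 ≤ ‖c‖ → c • v ∉ U := by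
  refine ⟨balancedCore 𝕜 {v}ᶜ,
    balancedCore_mem_nhds_zero (isOpen_compl_singleton.mem_nhds hv.symm), fun c hc hcv => ?_⟩
  have hc0 : c ≠ 0 := norm_pos_iff.mp (one_pos.trans_le hc)
  have := (balancedCore_balanced _).smul_mem
    (show ‖c⁻¹‖ ≤ 1 by rw [norm_inv]; exact inv_le_one_of_one_le₀ hc) hcv
  rw [inv_smul_smul₀ hc0] at this
  exact balancedCore_subset _ this rfl

theorem le_dist_natCast_smul_natCast_smul {X : Type*} [AddCommGroup X] [Module ℝ X]
    [PseudoMetricSpace X] (htrans : ∀ x y z : X, dist (x + z) (y + z) = dist x y) {v : X}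
    {δ : ℝ} (hδ : ∀ c : ℝ, 1 ≤ |c| → δ ≤ dist (c • v) 0) {c c' : ℕ} (hcc' : c ≠ c') :
    δ ≤ dist ((c : ℝ) • v) ((c' : ℝ) • v) := by
  have h1 : 1 ≤ |(c : ℝ) - c'| := by
    have h := Int.one_le_abs (sub_ne_zero.mpr (Nat.cast_injective.ne hcc') : (c : ℤ) - c' ≠ 0)
    exact_mod_cast h
  calc δ ≤ dist (((c : ℝ) - c') • v) 0 := hδ _ h1
    _ = dist ((c : ℝ) • v) ((c' : ℝ) • v) := by
      rw [← htrans _ 0 ((c' : ℝ) • v), sub_smul, sub_add_cancel, zero_add]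

theorem exists_isSep_near_zero_of_isPeriodicPt {X : Type*} [AddCommGroup X] [Module ℝ X]
    [PseudoMetricSpace X] (htrans : ∀ x y z : X, dist (x + z) (y + z) = dist x y)
    {T : X →ₗ[ℝ] X} (hspec : SpecProp T) {x₁ : X} {p : ℕ} (hp : 0 < p)
    (hper : IsPeriodicPt T p x₁) {δ : ℝ} (hδ : 0 < δ)
    (hsep : ∀ c : ℝ, 1 ≤ |c| → δ ≤ dist (c • x₁) 0) (r : ℝ) (hr : 0 < r) (C : ℝ) (n₀ : ℕ) :
    ∃ n ≥ n₀, ∃ E : Finset X,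
      (E : Set X) ⊆ ball 0 r ∧ IsSep T n (δ / 2) E ∧ Real.exp (C * n) ≤ E.card := by
  classical
  obtain ⟨N, hN⟩ := hspec.exists_dist_lt_dist_iterate_lt (lt_min hr (by positivity : 0 < δ / 4))
  set q := p * (N + n₀)
  have hq : N + n₀ ≤ q := Nat.le_mul_of_pos_left _ hp
  have hfix : ∀ c : ℝ, T^[q] (c • x₁) = c • x₁ := fun c => by
    rw [← Module.End.pow_apply, map_smul, Module.End.pow_apply, (hper.mul_const _).eq]
  choose g hg0 hgq using fun c : ℕ => hN q (by omega) 0 ((c : ℝ) • x₁)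
  have hgsep : ∀ c c', c ≠ c' → δ / 2 < dist (T^[q] (g c)) (T^[q] (g c')) := by
    intro c c' hcc'
    have h2 := hgq c
    have h3 := hgq c'
    rw [hfix] at h2 h3
    linarith [le_dist_natCast_smul_natCast_smul htrans hsep hcc', min_le_right r (δ / 4),
      dist_triangle4 ((c : ℝ) • x₁) (T^[q] (g c)) (T^[q] (g c')) ((c' : ℝ) • x₁),
      dist_comm ((c : ℝ) • x₁) (T^[q] (g c))]
  have hg : Injective g := fun c c' h => by
    by_contra hne
    have := hgsep c c' hne
    rw [h, dist_self] at this
    linarith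
  refine ⟨q + 1, by omega, (Finset.range ⌈Real.exp (C * (q + 1 : ℕ))⌉₊).image g, ?_, ?_, ?_⟩
  · intro x hx
    obtain ⟨c, -, rfl⟩ := Finset.mem_image.mp hx
    exact (hg0 c).trans_le (min_le_left _ _)
  · intro x hx y hy hxy
    obtain ⟨c, -, rfl⟩ := Finset.mem_image.mp hx
    obtain ⟨c', -, rfl⟩ := Finset.mem_image.mp hy
    exact ⟨q, q.lt_succ_self, hgsep c c' (by rintro rfl; exact hxy rfl)⟩
  · rw [Finset.card_image_of_injective _ hg, Finset.card_range]
    exact Nat.le_ceil _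

theorem infinite_entropy_of_specification_on_Fspace_general
    {X : Type*} [AddCommGroup X] [Module ℝ X] [MetricSpace X]
    (htrans : ∀ x y z : X, dist (x + z) (y + z) = dist x y)
    (hsmul : Continuous fun p : ℝ × X => p.1 • p.2)
    (hinf : ¬ Module.Finite ℝ X)
    (T : X →ₗ[ℝ] X) (hTc : Continuous T)
    (hspec : SpecProp (fun x => T x)) :
    entBowen (fun x => T x) = ⊤ := by
  have : ContinuousSMul ℝ X := ⟨hsmul⟩
  obtain ⟨z, hz⟩ : ∃ z : X, z ≠ 0 := by
    by_contra! h
    have : Subsingleton X := ⟨fun a b => (h a).trans (h b).symm⟩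
    exact hinf inferInstance
  obtain ⟨x₁, p, hp, hper, hx₁z⟩ := hspec.exists_isPeriodicPt_dist_lt z (dist_pos.mpr hz)
  have hx₁ : x₁ ≠ 0 := by
    rintro rfl
    exact hx₁z.ne (dist_comm _ _)
  obtain ⟨U, hU, hUx₁⟩ := exists_mem_nhds_zero_forall_smul_notMem ℝ hx₁
  obtain ⟨δ, hδ, hδU⟩ := Metric.mem_nhds_iff.mp hU
  exact entBowen_eq_top_of_forall_exists_isSep hTc 0 (half_pos hδ)
    (exists_isSep_near_zero_of_isPeriodicPt htrans hspec hp hper hδ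
      fun c hc => not_lt.mp fun h => hUx₁ c hc (hδU (mem_ball.mpr h)))

theorem infinite_entropy_of_specification_on_Fspace
    {X : Type*} [AddCommGroup X] [Module ℝ X] [MetricSpace X] [CompleteSpace X]
    (htrans : ∀ x y z : X, dist (x + z) (y + z) = dist x y)
    (hadd : Continuous fun p : X × X => p.1 + p.2)
    (hsmul : Continuous fun p : ℝ × X => p.1 • p.2)
    (hinf : ¬ Module.Finite ℝ X)
    (T : X →ₗ[ℝ] X) (hTc : Continuous T)
    (hspec : SpecProp (fun x => T x)) :
    entBowen (fun x => T x) = ⊤ :=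
  infinite_entropy_of_specification_on_Fspace_general htrans hsmul hinf T hTc hspec
end

section
/- A continuous linear operator on a Banach space cannot have the specification property; more precisely, any linear map on a nontrivial Banach space satisfying the specification property with respect to the norm metric is unbounded. -/
open Filter Topology

/-
Specification with `ε = 1` and gap `N` yields a periodic point of period `N` within distance `1`
of a unit vector, and, for every `y`, an orbit starting in the unit ball that is `1`-close to
`f^N(y)` at time `N`. For linear `f` the first gives a nonzero fixed point `x` of `f^N`, hence
fixed points `n • x` of arbitrarily large norm; for bounded `f` the second confines every `f^N(y)`
to the ball of radius `‖f^N‖ + 1`.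
-/

section Tracking
variable {Y : Type*} [PseudoMetricSpace Y] {f : Y → Y}

theorem SpecProp.exists_tracking (hf : SpecProp f) {ε : ℝ} (hε : 0 < ε) :
    ∃ N : ℕ, (∀ y, ∃ x, Function.IsPeriodicPt f N x ∧ dist x y < ε) ∧
      ∀ y₀ y₁, ∃ z, dist z y₀ < ε ∧ dist (f^[N] z) (f^[N] y₁) < ε := by
  obtain ⟨N, hN⟩ := hf ε hε
  refine ⟨N, fun y => ?_, fun y₀ y₁ => ?_⟩
  · obtain ⟨x, -, hper, hclose⟩ := hN 1 one_pos (fun _ => y) (fun _ _ => trivial) 0 0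
      (fun _ _ => le_rfl) (by omega)
    exact ⟨x, hper, by simpa using hclose 0 one_pos 0 le_rfl le_rfl⟩
  · obtain ⟨z, -, -, hclose⟩ := hN 2 two_pos (fun i => if i = 0 then y₀ else y₁)
      (fun _ _ => trivial)
      (N * ·) (N * ·) (fun _ _ => le_rfl) (fun i _ => (Nat.mul_succ N i).ge)
    exact ⟨z, by simpa using hclose 0 two_pos 0 le_rfl le_rfl,
      by simpa using hclose 1 one_lt_two N (by simp) (by simp)⟩

end Tracking

namespace ContinuousLinearMap

variable {𝕜 E : Type*} [RCLike 𝕜] [NormedAddCommGroup E] [NormedSpace 𝕜 E]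

theorem norm_apply_lt_opNorm_add_one (T : E →L[𝕜] E)
    (hT : ∀ y, ∃ z, ‖z‖ < 1 ∧ dist (T z) (T y) < 1) (y : E) : ‖T y‖ < ‖T‖ + 1 := by
  obtain ⟨z, hz, hzy⟩ := hT y
  calc ‖T y‖ ≤ ‖T z‖ + ‖T z - T y‖ := norm_le_norm_add_norm_sub _ _
    _ < ‖T‖ * 1 + 1 := by
      refine add_lt_add_of_le_of_lt ?_ (by rwa [← dist_eq_norm])
      exact (T.le_opNorm z).trans (by gcongr)
    _ = ‖T‖ + 1 := by rw [mul_one]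

theorem eq_zero_of_isFixedPt (T : E →L[𝕜] E)
    (hT : ∀ y, ∃ z, ‖z‖ < 1 ∧ dist (T z) (T y) < 1) {x : E} (hx : Function.IsFixedPt T x) :
    x = 0 := by
  by_contra hx0
  obtain ⟨n, hn⟩ := exists_nat_gt ((‖T‖ + 1) / ‖x‖)
  have hfix : T (n • x) = n • x := by rw [map_nsmul, hx.eq]
  have := T.norm_apply_lt_opNorm_add_one hT (n • x)
  rw [hfix, RCLike.norm_nsmul 𝕜, nsmul_eq_mul] at this
  rw [div_lt_iff₀ (norm_pos_iff.2 hx0)] at hn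
  linarith

end ContinuousLinearMap

theorem not_continuous_of_specification_on_banach_general
    {X : Type*} [NormedAddCommGroup X] [NormedSpace ℂ X] [Nontrivial X]
    (L : X →ₗ[ℂ] X) (h : SpecProp (fun x => L x)) :
    ¬ Continuous L := by
  intro hc
  obtain ⟨N, hper, htrack⟩ := h.exists_tracking one_pos
  set T : X →L[ℂ] X := ⟨L, hc⟩ ^ N
  have hT : ⇑T = (fun x => L x)^[N] := FunLike.coe_pow_eq_iterate _ _
  obtain ⟨y, hy⟩ := exists_norm_eq X zero_le_one
  obtain ⟨x, hx, hxy⟩ := hper y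
  have hx0 : x = 0 := T.eq_zero_of_isFixedPt
    (fun y₁ => by simpa [hT, dist_zero_right] using htrack 0 y₁) (hT ▸ hx)
  simp [hx0, hy] at hxy

theorem not_continuous_of_specification_on_banach
    {X : Type*} [NormedAddCommGroup X] [NormedSpace ℂ X] [CompleteSpace X] [Nontrivial X]
    (L : X →ₗ[ℂ] X) (h : SpecProp (fun x => L x)) :
    ¬ Continuous L :=
  not_continuous_of_specification_on_banach_general L h
end

section
/- Let T be a compact operator on a complex Banach space with Riesz splitting X = X_u ⊕ X_c ⊕ X_s into closed T-invariant subspaces with σ(T|_{X_u}) = {λ ∈ σ(T) : |λ| > 1}, σ(T|_{X_c}) = {λ : |λ| = 1}, σ(T|_{X_s}) = {λ : |λ| < 1}. Then every T-invariant Borel probability measure μ on X has its support contained in X_c. -/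
/-!
Write `x = u + w + s` along the splitting; by the open mapping theorem the components depend
continuously on `x`, and they intertwine `T` with `Tu`, `Tc`, `Ts`. By Gelfand's formula some power
of `Tu` expands norms by a factor `c > 1` and some power of `Ts` contracts them by `c⁻¹`. Invariance
of `μ` then gives `μ {ε ≤ ‖u‖} ≤ μ {c ε ≤ ‖u‖}` for all `ε > 0`; iterating and letting `cᵏ ε → ∞`
yields `μ {u ≠ 0} = 0`, and likewise `μ {s ≠ 0} = 0`. So the closed set `Xc` is conull and
contains the support.
-/

open MeasureTheory Filter Topology Function

section InvariantMeasure

variable {X : Type*} [MeasurableSpace X] {μ : Measure X} [IsFiniteMeasure μ] {g : X → ℝ}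

lemma tendsto_measure_setOf_le_atTop (hg : Measurable g) :
    Tendsto (fun M : ℝ => μ {x | M ≤ g x}) atTop (𝓝 0) := by
  have hempty : (⋂ M : ℝ, {x | M ≤ g x}) = ∅ := by
    ext x
    simpa using exists_gt (g x)
  have := tendsto_measure_iInter_atTop (μ := μ) (s := fun M : ℝ => {x | M ≤ g x})
    (fun M => (hg measurableSet_Ici).nullMeasurableSet) (fun _ _ hab _ hx => hab.trans hx)
    ⟨0, measure_ne_top μ _⟩
  rwa [hempty, measure_empty] at this

lemma measure_pos_eq_zero_of_measure_le_scaled (hg : Measurable g) {c : ℝ} (hc : 1 < c)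
    (h : ∀ ε > 0, μ {x | ε ≤ g x} ≤ μ {x | c * ε ≤ g x}) : μ {x | 0 < g x} = 0 := by
  have hε : ∀ ε > 0, μ {x | ε ≤ g x} = 0 := by
    intro ε hε
    have hk : ∀ k : ℕ, μ {x | ε ≤ g x} ≤ μ {x | c ^ k * ε ≤ g x} := by
      intro k
      induction k with
      | zero => simp
      | succ k ih =>
        calc _ ≤ _ := ih
          _ ≤ μ {x | c * (c ^ k * ε) ≤ g x} := h _ (by positivity)
          _ = _ := by rw [pow_succ', mul_assoc]
    have hlim : Tendsto (fun k : ℕ => c ^ k * ε) atTop atTop :=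
      (tendsto_pow_atTop_atTop_of_one_lt hc).atTop_mul_const hε
    exact nonpos_iff_eq_zero.mp
      (ge_of_tendsto' ((tendsto_measure_setOf_le_atTop hg).comp hlim) hk)
  have hunion : {x | 0 < g x} = ⋃ n : ℕ, {x | 1 / ((n : ℝ) + 1) ≤ g x} := by
    ext x
    simp only [Set.mem_ofPred_eq, Set.mem_iUnion]
    exact ⟨fun hx => (exists_nat_one_div_lt hx).imp fun _ => le_of_lt,
      fun ⟨n, hn⟩ => lt_of_lt_of_le (by positivity) hn⟩
  rw [hunion]
  exact measure_iUnion_null fun n => hε _ (by positivity)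

variable {f : X → X} {n : ℕ} {c : ℝ}

lemma measure_pos_eq_zero_of_expanding (hf : MeasurePreserving f μ μ) (hg : Measurable g)
    (hc : 1 < c) (hexp : ∀ x, c * g x ≤ g (f^[n] x)) : μ {x | 0 < g x} = 0 := by
  refine measure_pos_eq_zero_of_measure_le_scaled hg hc fun ε hε => ?_
  calc μ {x | ε ≤ g x} ≤ μ (f^[n] ⁻¹' {x | c * ε ≤ g x}) :=
        measure_mono fun x hx => (mul_le_mul_of_nonneg_left hx (by linarith)).trans (hexp x)
    _ = μ {x | c * ε ≤ g x} :=
        (hf.iterate n).measure_preimage (hg measurableSet_Ici).nullMeasurableSet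

lemma measure_pos_eq_zero_of_contracting (hf : MeasurePreserving f μ μ) (hg : Measurable g)
    (hc : 1 < c) (hcontr : ∀ x, c * g (f^[n] x) ≤ g x) : μ {x | 0 < g x} = 0 := by
  refine measure_pos_eq_zero_of_measure_le_scaled hg hc fun ε hε => ?_
  calc μ {x | ε ≤ g x} = μ (f^[n] ⁻¹' {x | ε ≤ g x}) :=
        ((hf.iterate n).measure_preimage (hg measurableSet_Ici).nullMeasurableSet).symm
    _ ≤ μ {x | c * ε ≤ g x} :=
        measure_mono fun x hx => (mul_le_mul_of_nonneg_left hx (by linarith)).trans (hcontr x)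

end InvariantMeasure

section Spectrum

lemma exists_norm_pow_lt_one_of_spectrum_subset_ball {A : Type*} [NormedRing A]
    [NormedAlgebra ℂ A] [CompleteSpace A] {a : A} (ha : ∀ z ∈ spectrum ℂ a, ‖z‖ < 1) :
    ∃ n : ℕ, ‖a ^ n‖ < 1 := by
  rcases subsingleton_or_nontrivial A with hA | hA
  · exact ⟨0, by simp [Subsingleton.elim (1 : A) 0]⟩
  have hrad : spectralRadius ℂ a < 1 :=
    spectrum.spectralRadius_lt_of_forall_lt a fun z hz => by exact_mod_cast ha z hz
  obtain ⟨n, hn, hlt⟩ := ((eventually_ge_atTop 1).and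
    ((spectrum.pow_norm_pow_one_div_tendsto_nhds_spectralRadius a).eventually_lt_const hrad)).exists
  refine ⟨n, ?_⟩
  rwa [ENNReal.ofReal_lt_one, Real.rpow_lt_one_iff' (norm_nonneg _) (by positivity)] at hlt

variable {E : Type*} [NormedAddCommGroup E] [NormedSpace ℂ E] [CompleteSpace E]
  {a : E →L[ℂ] E}

lemma ContinuousLinearMap.exists_pow_contracting (ha : ∀ z ∈ spectrum ℂ a, ‖z‖ < 1) :
    ∃ (n : ℕ) (c : ℝ), 1 < c ∧ ∀ v, c * ‖(a ^ n) v‖ ≤ ‖v‖ := by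
  obtain ⟨n, hn⟩ := exists_norm_pow_lt_one_of_spectrum_subset_ball ha
  obtain ⟨r, hnr, hr1⟩ := exists_between hn
  have hr0 : 0 < r := (norm_nonneg _).trans_lt hnr
  refine ⟨n, r⁻¹, one_lt_inv₀ hr0 |>.mpr hr1, fun v => ?_⟩
  rw [inv_mul_le_iff₀ hr0]
  calc ‖(a ^ n) v‖ ≤ ‖a ^ n‖ * ‖v‖ := (a ^ n).le_opNorm v
    _ ≤ r * ‖v‖ := by gcongr

lemma ContinuousLinearMap.exists_pow_expanding (ha : ∀ z ∈ spectrum ℂ a, 1 < ‖z‖) :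
    ∃ (n : ℕ) (c : ℝ), 1 < c ∧ ∀ v, c * ‖v‖ ≤ ‖(a ^ n) v‖ := by
  obtain ⟨u, rfl⟩ : IsUnit a := spectrum.isUnit_of_zero_notMem ℂ fun h => (ha 0 h).not_ge (by simp)
  have hinv : ∀ z ∈ spectrum ℂ (↑u⁻¹ : E →L[ℂ] E), ‖z‖ < 1 := by
    rw [← spectrum.map_inv]
    intro z hz
    have := ha _ (Set.mem_inv.mp hz)
    rw [norm_inv, one_lt_inv_iff₀] at this
    exact this.2
  obtain ⟨n, c, hc, hcontr⟩ := exists_pow_contracting hinv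
  refine ⟨n, c, hc, fun v => ?_⟩
  have hv : ((↑u⁻¹ : E →L[ℂ] E) ^ n) (((u : E →L[ℂ] E) ^ n) v) = v := by
    rw [← mul_apply_eq_comp, ← Units.val_pow_eq_pow_val, ← Units.val_pow_eq_pow_val,
      ← Units.val_mul, inv_pow, inv_mul_cancel, Units.val_one, one_apply_eq_self]
  simpa only [hv] using hcontr (((u : E →L[ℂ] E) ^ n) v)

end Spectrum

section Decomposition

variable {𝕜 X : Type*} [NontriviallyNormedField 𝕜] [NormedAddCommGroup X] [NormedSpace 𝕜 X]
  [CompleteSpace X] {U V W : Submodule 𝕜 X} [CompleteSpace U] [CompleteSpace V] [CompleteSpace W]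

namespace Submodule

noncomputable def prodEquivOfExistsUnique
    (h : ∀ x : X, ∃! p : U × V × W, (p.1 : X) + p.2.1 + p.2.2 = x) : (U × V × W) ≃L[𝕜] X :=
  have hbij : Bijective (U.subtypeL.coprod (V.subtypeL.coprod W.subtypeL)) :=
    (bijective_iff_existsUnique _).mpr fun x => by simpa [add_assoc] using h x
  .ofBijective _ (LinearMap.ker_eq_bot.mpr hbij.1) (LinearMap.range_eq_top.mpr hbij.2)

variable (h : ∀ x : X, ∃! p : U × V × W, (p.1 : X) + p.2.1 + p.2.2 = x)

@[simp]
lemma prodEquivOfExistsUnique_apply (p : U × V × W) :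
    prodEquivOfExistsUnique h p = (p.1 : X) + p.2.1 + p.2.2 := by
  simp [prodEquivOfExistsUnique, add_assoc]

lemma mem_of_prodEquivOfExistsUnique_symm {x : X}
    (hU : ((prodEquivOfExistsUnique h).symm x).1 = 0)
    (hW : ((prodEquivOfExistsUnique h).symm x).2.2 = 0) : x ∈ V := by
  rw [← (prodEquivOfExistsUnique h).apply_symm_apply x, prodEquivOfExistsUnique_apply, hU, hW]
  simp

lemma semiconj_prodEquivOfExistsUnique_symm {T : X →L[𝕜] X} {TU : U →L[𝕜] U} {TV : V →L[𝕜] V}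
    {TW : W →L[𝕜] W} (hTU : ∀ v, (TU v : X) = T v) (hTV : ∀ v, (TV v : X) = T v)
    (hTW : ∀ v, (TW v : X) = T v) :
    Semiconj (prodEquivOfExistsUnique h).symm T (Prod.map TU (Prod.map TV TW)) := by
  have hconj : Semiconj (prodEquivOfExistsUnique h) (Prod.map TU (Prod.map TV TW)) T :=
    fun p => by simp [hTU, hTV, hTW]
  exact hconj.inverse_left (prodEquivOfExistsUnique h).symm_apply_apply
    (prodEquivOfExistsUnique h).apply_symm_apply

end Submodule

end Decomposition

theorem support_of_invariant_measure_in_central_subspace_general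
    {X : Type*} [NormedAddCommGroup X] [NormedSpace ℂ X] [CompleteSpace X]
    [MeasurableSpace X] [BorelSpace X]
    (T : X →L[ℂ] X)
    (Xu Xc Xs : Submodule ℂ X)
    (hu : IsClosed (Xu : Set X)) (hc : IsClosed (Xc : Set X)) (hs : IsClosed (Xs : Set X))
    (hdirect : ∀ x : X, ∃! p : Xu × Xc × Xs, (p.1 : X) + (p.2.1 : X) + (p.2.2 : X) = x)
    (Tu : Xu →L[ℂ] Xu) (hTu : ∀ v : Xu, (Tu v : X) = T v)
    (Tc : Xc →L[ℂ] Xc) (hTc : ∀ v : Xc, (Tc v : X) = T v)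
    (Ts : Xs →L[ℂ] Xs) (hTs : ∀ v : Xs, (Ts v : X) = T v)
    (hσu : spectrum ℂ Tu = {μ ∈ spectrum ℂ T | 1 < ‖μ‖})
    (hσs : spectrum ℂ Ts = {μ ∈ spectrum ℂ T | ‖μ‖ < 1})
    (μ : Measure X) [IsProbabilityMeasure μ]
    (hinv : MeasurePreserving (fun x => T x) μ μ) :
    {x : X | ∀ U ∈ nhds x, 0 < μ U} ⊆ (Xc : Set X) := by
  have := hu.completeSpace_coe
  have := hc.completeSpace_coe
  have := hs.completeSpace_coe
  replace hinv : MeasurePreserving T μ μ := hinv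
  set π := (Submodule.prodEquivOfExistsUnique hdirect).symm
  have hπ : Semiconj π T (Prod.map Tu (Prod.map Tc Ts)) :=
    Submodule.semiconj_prodEquivOfExistsUnique_symm hdirect hTu hTc hTs
  have hXu : μ {x | 0 < ‖(π x).1‖} = 0 := by
    obtain ⟨n, c, hc1, hexp⟩ := Tu.exists_pow_expanding fun z hz => (hσu ▸ hz).2
    refine measure_pos_eq_zero_of_expanding hinv (by fun_prop : Continuous _).measurable hc1
      (n := n) fun x => ?_
    rw [hπ.iterate_right n x, Prod.map_iterate]
    simpa using hexp (π x).1
  have hXs : μ {x | 0 < ‖(π x).2.2‖} = 0 := by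
    obtain ⟨n, c, hc1, hcontr⟩ := Ts.exists_pow_contracting fun z hz => (hσs ▸ hz).2
    refine measure_pos_eq_zero_of_contracting hinv (by fun_prop : Continuous _).measurable hc1
      (n := n) fun x => ?_
    rw [hπ.iterate_right n x, Prod.map_iterate]
    simpa using hcontr (π x).2.2
  have hae : (Xc : Set X) ∈ ae μ := by
    refine measure_mono_null (fun x hx => ?_) (measure_union_null hXu hXs)
    by_contra! hx'
    simp only [Set.mem_union, Set.mem_ofPred_eq, norm_pos_iff, not_or, not_not] at hx'
    exact hx (Submodule.mem_of_prodEquivOfExistsUnique_symm hdirect hx'.1 hx'.2)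
  intro x hx
  exact Measure.support_subset_of_isClosed hc hae ((Measure.mem_support_iff_forall x).2 hx)

theorem support_of_invariant_measure_in_central_subspace
    {X : Type*} [NormedAddCommGroup X] [NormedSpace ℂ X] [CompleteSpace X]
    [MeasurableSpace X] [BorelSpace X]
    (T : X →L[ℂ] X) (hT : IsCompactOperator T)
    (Xu Xc Xs : Submodule ℂ X)
    (hu : IsClosed (Xu : Set X)) (hc : IsClosed (Xc : Set X)) (hs : IsClosed (Xs : Set X))
    (hiu : ∀ x ∈ Xu, T x ∈ Xu) (hic : ∀ x ∈ Xc, T x ∈ Xc) (his : ∀ x ∈ Xs, T x ∈ Xs)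
    (hdirect : ∀ x : X, ∃! p : Xu × Xc × Xs, (p.1 : X) + (p.2.1 : X) + (p.2.2 : X) = x)
    (Tu : Xu →L[ℂ] Xu) (hTu : ∀ v : Xu, (Tu v : X) = T v)
    (Tc : Xc →L[ℂ] Xc) (hTc : ∀ v : Xc, (Tc v : X) = T v)
    (Ts : Xs →L[ℂ] Xs) (hTs : ∀ v : Xs, (Ts v : X) = T v)
    (hσu : spectrum ℂ Tu = {μ ∈ spectrum ℂ T | 1 < ‖μ‖})
    (hσc : spectrum ℂ Tc = {μ ∈ spectrum ℂ T | ‖μ‖ = 1})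
    (hσs : spectrum ℂ Ts = {μ ∈ spectrum ℂ T | ‖μ‖ < 1})
    (μ : Measure X) [IsProbabilityMeasure μ]
    (hinv : MeasurePreserving (fun x => T x) μ μ) :
    {x : X | ∀ U ∈ nhds x, 0 < μ U} ⊆ (Xc : Set X) :=
  support_of_invariant_measure_in_central_subspace_general T Xu Xc Xs hu hc hs hdirect Tu hTu Tc hTc
    Ts hTs hσu hσs μ hinv
end
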